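/- arXiv:2201.07628 — 3 statements merged into one kernel-verified Lean document; each statement's English description precedes it below -/
import Mathlib

section
/- Let Q be a discrete probability measure on ℝ^d whose support contains at most k points, and let H_1, …, H_{k+1} be linear subspaces of ℝ^d such that H_i^⊥ ∩ H_j^⊥ = {0} whenever i ≠ j. Then for every Borel probability measure P on ℝ^d and every point x ∈ ℝ^d, P({x}) − Q({x}) ≤ max over 1 ≤ j ≤ k+1 of (P_{H_j}({π_{H_j}(x)}) − Q_{H_j}({π_{H_j}(x)})). -/
open MeasureTheory

/-- Total variation distance between two measures. -/
noncomputable def dTV {α : Type*} [MeasurableSpace α] (P Q : Measure α) : ℝ :=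
  ⨆ A : {A : Set α // MeasurableSet A}, |(P A).toReal - (Q A).toReal|

/-- The projection of a measure `P` on `ℝ^d` onto a subspace `H`:
the pushforward of `P` under the orthogonal projection onto `H`. -/
noncomputable def projMeasure {d : ℕ} (H : Submodule ℝ (EuclideanSpace ℝ (Fin d)))
    (P : Measure (EuclideanSpace ℝ (Fin d))) : Measure H :=
  P.map (H.orthogonalProjectionOnto)

/-! The fibre of `π_H` through `x` is the affine subspace `x + H^⊥`. Since the spaces `H_j^⊥` meet
pairwise only in `0`, each of the at most `k` points of the support of `Q` other than `x` lies on
at most one of the `k + 1` fibres, so some fibre `F` meets the support of `Q` at most in `x`.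
For that fibre `P {x} ≤ P F` and `Q F ≤ Q {x}`. -/

theorem exists_forall_sub_mem_imp_eq_of_card_lt {R M ι : Type*} [Ring R] [AddCommGroup M]
    [Module R M] [Fintype ι] {V : ι → Submodule R M}
    (hV : Pairwise fun i j => V i ⊓ V j = ⊥) {S : Finset M} (hS : S.card < Fintype.card ι)
    (x : M) : ∃ j, ∀ s ∈ S, s - x ∈ V j → s = x := by
  by_contra! h
  choose f hfS hfV hfx using h
  obtain ⟨i, j, hij, hf⟩ := Fintype.exists_ne_map_eq_of_card_lt
    (fun i => (⟨f i, hfS i⟩ : S)) (by simpa using hS)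
  have hfij : f i = f j := congrArg Subtype.val hf
  have hmem : f i - x ∈ V i ⊓ V j := ⟨hfV i, hfij ▸ hfV j⟩
  rw [hV hij, Submodule.mem_bot, sub_eq_zero] at hmem
  exact hfx i hmem

theorem measureReal_sub_le_of_subset {α : Type*} [MeasurableSpace α] {μ ν : Measure α}
    [IsFiniteMeasure μ] [IsFiniteMeasure ν] {A B : Set α} (hAB : A ⊆ B) (hν : ν B ≤ ν A) :
    μ.real A - ν.real A ≤ μ.real B - ν.real B := by
  have hμ : μ.real A ≤ μ.real B := measureReal_mono hAB
  have hν' : ν.real B ≤ ν.real A := ENNReal.toReal_mono (measure_ne_top ν A) hν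
  linarith

theorem measure_le_measure_singleton_of_compl_null {α : Type*} [MeasurableSpace α] {μ : Measure α}
    {S F : Set α} (hS : μ Sᶜ = 0) {x : α} (hF : ∀ y ∈ S, y ∈ F → y = x) : μ F ≤ μ {x} := by
  refine measure_mono_ae ?_
  filter_upwards [mem_ae_iff.2 hS] with y hyS hyF using hF y hyS hyF

theorem Submodule.orthogonalProjectionOnto_eq_iff_sub_mem_orthogonal {𝕜 E : Type*} [RCLike 𝕜]
    [NormedAddCommGroup E] [InnerProductSpace 𝕜 E] (K : Submodule 𝕜 E)
    [K.HasOrthogonalProjection] {x y : E} :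
    K.orthogonalProjectionOnto y = K.orthogonalProjectionOnto x ↔ y - x ∈ Kᗮ := by
  rw [← Submodule.orthogonalProjectionOnto_eq_zero_iff, map_sub, sub_eq_zero]

theorem projMeasure_singleton_orthogonalProjectionOnto {d : ℕ}
    (H : Submodule ℝ (EuclideanSpace ℝ (Fin d))) (P : Measure (EuclideanSpace ℝ (Fin d)))
    (x : EuclideanSpace ℝ (Fin d)) :
    projMeasure H P {H.orthogonalProjectionOnto x} = P {y | y - x ∈ Hᗮ} := by
  rw [projMeasure, Measure.map_apply H.orthogonalProjectionOnto.continuous.measurable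
    (measurableSet_singleton _)]
  congr 1
  ext y
  exact H.orthogonalProjectionOnto_eq_iff_sub_mem_orthogonal

theorem stmt1 {d k : ℕ} (P Q : Measure (EuclideanSpace ℝ (Fin d)))
    [IsProbabilityMeasure P] [IsProbabilityMeasure Q]
    (S : Finset (EuclideanSpace ℝ (Fin d))) (hScard : S.card ≤ k)
    (hQS : Q (↑S : Set (EuclideanSpace ℝ (Fin d)))ᶜ = 0)
    (H : Fin (k + 1) → Submodule ℝ (EuclideanSpace ℝ (Fin d)))
    (hH : ∀ i j, i ≠ j → (H i)ᗮ ⊓ (H j)ᗮ = ⊥)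
    (x : EuclideanSpace ℝ (Fin d)) :
    (P {x}).toReal - (Q {x}).toReal ≤
      ⨆ j : Fin (k + 1),
        ((projMeasure (H j) P) {(H j).orthogonalProjectionOnto x}).toReal -
          ((projMeasure (H j) Q) {(H j).orthogonalProjectionOnto x}).toReal := by
  obtain ⟨j, hj⟩ := exists_forall_sub_mem_imp_eq_of_card_lt (V := fun j => (H j)ᗮ) hH
    (S := S) (by simpa using Nat.lt_succ_of_le hScard) x
  refine le_ciSup_of_le (Set.finite_range _).bddAbove j ?_
  simp only [projMeasure_singleton_orthogonalProjectionOnto]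
  exact measureReal_sub_le_of_subset (by simp)
    (measure_le_measure_singleton_of_compl_null hQS hj)
end

section
/- Quantitative Heppes theorem: Let Q be a discrete probability measure on ℝ^d whose support contains at most k points, and let H_1, …, H_{k+1} be linear subspaces of ℝ^d such that H_i^⊥ ∩ H_j^⊥ = {0} for i ≠ j. Then for every Borel probability measure P on ℝ^d, d_TV(P,Q) ≤ Σ_{j=1}^{k+1} d_TV(P_{H_j}, Q_{H_j}). -/
open MeasureTheory

/-!
Write `π_j` for the projection onto `H_j`. Because `ker π_i ∩ ker π_j = 0`, two distinct points
agree under at most one `π_j`; as there are `k + 1` projections and at most `k` support points,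
every `w` is separated by some `π_{j(w)}` from all points of `S` other than `w`.

For a test set `A`, put `T_j = {x ∈ A ∩ S | j(x) = j}` and `B_j = (π_j S)ᶜ ∪ π_j T_j`. Then
`π_j⁻¹ B_j` meets `S` exactly in `T_j` and contains `π_j⁻¹ (π_j S)ᶜ`, so
`P_{H_j}(B_j) - Q_{H_j}(B_j) ≥ P(π_j⁻¹ (π_j S)ᶜ) + P(T_j) - Q(T_j)`. The sets `π_j⁻¹ (π_j S)ᶜ`
cover `Sᶜ`, so summing over `j` bounds `P(A) - Q(A) ≤ P(Sᶜ) + P(A ∩ S) - Q(A ∩ S)`.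
-/

open Finset

section TotalVariation

variable {α : Type*} [MeasurableSpace α]

lemma measureReal_inter_conull {μ : Measure α} {s t : Set α} (ht : μ tᶜ = 0) :
    μ.real (s ∩ t) = μ.real s := by
  rw [measureReal_def, measure_inter_conull ht, measureReal_def]

lemma bddAbove_range_abs_measureReal_sub (P Q : Measure α) [IsFiniteMeasure P]
    [IsFiniteMeasure Q] :
    BddAbove (Set.range fun A : {A : Set α // MeasurableSet A} => |P.real A - Q.real A|) := by
  refine ⟨P.real Set.univ + Q.real Set.univ, ?_⟩
  rintro _ ⟨A, rfl⟩
  calc |P.real A - Q.real A| ≤ |P.real A| + |Q.real A| := abs_sub _ _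
    _ ≤ P.real Set.univ + Q.real Set.univ := by
      rw [abs_of_nonneg measureReal_nonneg, abs_of_nonneg measureReal_nonneg]
      exact add_le_add (measureReal_mono (Set.subset_univ _)) (measureReal_mono (Set.subset_univ _))

lemma measureReal_sub_le_dTV (P Q : Measure α) [IsFiniteMeasure P] [IsFiniteMeasure Q]
    {A : Set α} (hA : MeasurableSet A) : P.real A - Q.real A ≤ dTV P Q :=
  (le_abs_self _).trans (le_ciSup (bddAbove_range_abs_measureReal_sub P Q) ⟨A, hA⟩)

lemma dTV_le_of_forall_measureReal_sub_le {P Q : Measure α} [IsProbabilityMeasure P]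
    [IsProbabilityMeasure Q] {c : ℝ} (h : ∀ A, MeasurableSet A → P.real A - Q.real A ≤ c) :
    dTV P Q ≤ c := by
  have : Nonempty {A : Set α // MeasurableSet A} := ⟨⟨∅, MeasurableSet.empty⟩⟩
  refine ciSup_le fun ⟨A, hA⟩ => abs_sub_le_iff.2 ⟨h A hA, ?_⟩
  show Q.real A - P.real A ≤ c
  have hc := h Aᶜ hA.compl
  rw [measureReal_compl hA, measureReal_compl hA, probReal_univ, probReal_univ] at hc
  linarith

end TotalVariation

theorem exists_separating_index_of_card_lt {ι α : Type*} {β : ι → Type*} [Fintype ι]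
    {f : ∀ i, α → β i} (hf : ∀ i j, i ≠ j → Function.Injective fun x => (f i x, f j x))
    {S : Finset α} (hS : #S < Fintype.card ι) (w : α) :
    ∃ i, ∀ y ∈ S, y ≠ w → f i y ≠ f i w := by
  by_contra! hcon
  choose g hgS hgw hg using hcon
  have hinj : Function.Injective fun i => (⟨g i, hgS i⟩ : S) := by
    intro i j hval
    by_contra hij
    have hgij : g i = g j := congrArg Subtype.val hval
    exact hgw i (hf i j hij (Prod.ext (hg i) (by dsimp only; rw [hgij, hg j])))
  have hcard := Fintype.card_le_of_injective _ hinj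
  rw [Fintype.card_coe] at hcard
  omega

lemma injective_orthogonalProjectionOnto_prod {E : Type*} [NormedAddCommGroup E]
    [InnerProductSpace ℝ E] {K L : Submodule ℝ E} [K.HasOrthogonalProjection]
    [L.HasOrthogonalProjection] (h : Kᗮ ⊓ Lᗮ = ⊥) :
    Function.Injective fun x => (K.orthogonalProjectionOnto x, L.orthogonalProjectionOnto x) := by
  have hker : LinearMap.ker ((K.orthogonalProjectionOnto : E →ₗ[ℝ] K).prod
      (L.orthogonalProjectionOnto : E →ₗ[ℝ] L)) = ⊥ := by
    rw [LinearMap.ker_prod, Submodule.ker_orthogonalProjectionOnto,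
      Submodule.ker_orthogonalProjectionOnto, h]
  exact LinearMap.ker_eq_bot.1 hker

section Separating

variable {α : Type*} [MeasurableSpace α] [MeasurableSingletonClass α] {P Q : Measure α}
  {S : Finset α}

lemma measureReal_sub_le_dTV_map {β : Type*} [MeasurableSpace β] [MeasurableSingletonClass β]
    [IsFiniteMeasure P] [IsFiniteMeasure Q] {g : α → β} (hg : Measurable g)
    (hQS : Q (↑S)ᶜ = 0) {T : Finset α} (hTS : T ⊆ S)
    (hT : ∀ x ∈ T, ∀ y ∈ S, y ≠ x → g y ≠ g x) :
    P.real (g ⁻¹' (g '' S)ᶜ) + (P.real T - Q.real T) ≤ dTV (P.map g) (Q.map g) := by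
  set B := (g '' S)ᶜ ∪ g '' T
  have hB : MeasurableSet B :=
    (S.finite_toSet.image g).measurableSet.compl.union (T.finite_toSet.image g).measurableSet
  have hBS : g ⁻¹' B ∩ S = T := by
    ext y
    refine ⟨?_, fun hy => ⟨Or.inr ⟨y, hy, rfl⟩, hTS hy⟩⟩
    rintro ⟨hyS' | ⟨x, hx, hxy⟩, hyS⟩
    · exact absurd ⟨y, hyS, rfl⟩ hyS'
    · by_contra hyx
      exact hT x hx y hyS (fun h => hyx (h ▸ hx)) hxy.symm
  have hdisj : Disjoint (g ⁻¹' (g '' S)ᶜ) T :=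
    Set.disjoint_left.2 fun y hyU hyT => hyU ⟨y, hTS hyT, rfl⟩
  have hsub : g ⁻¹' (g '' S)ᶜ ∪ T ⊆ g ⁻¹' B :=
    Set.union_subset (Set.preimage_mono Set.subset_union_left)
      (Set.image_subset_iff.1 Set.subset_union_right)
  calc P.real (g ⁻¹' (g '' S)ᶜ) + (P.real T - Q.real T)
      = P.real (g ⁻¹' (g '' S)ᶜ ∪ T) - Q.real (g ⁻¹' B) := by
        rw [measureReal_union hdisj T.finite_toSet.measurableSet, ← hBS,
          measureReal_inter_conull hQS]
        ring
    _ ≤ P.real (g ⁻¹' B) - Q.real (g ⁻¹' B) := sub_le_sub_right (measureReal_mono hsub) _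
    _ = (P.map g).real B - (Q.map g).real B := by
        rw [map_measureReal_apply hg hB, map_measureReal_apply hg hB]
    _ ≤ dTV (P.map g) (Q.map g) := measureReal_sub_le_dTV _ _ hB

theorem dTV_le_sum_dTV_map {ι : Type*} [Fintype ι] {β : ι → Type*}
    [∀ i, MeasurableSpace (β i)] [∀ i, MeasurableSingletonClass (β i)]
    [IsProbabilityMeasure P] [IsProbabilityMeasure Q] {f : ∀ i, α → β i}
    (hf : ∀ i, Measurable (f i)) (hQS : Q (↑S)ᶜ = 0)
    (hsep : ∀ w, ∃ i, ∀ y ∈ S, y ≠ w → f i y ≠ f i w) :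
    dTV P Q ≤ ∑ i, dTV (P.map (f i)) (Q.map (f i)) := by
  classical
  choose j hj using hsep
  refine dTV_le_of_forall_measureReal_sub_le fun A hA => ?_
  set T := {x ∈ S | x ∈ A}
  have hTA : (T : Set α) = A ∩ S := by
    ext x
    simp [T, and_comm]
  have hA_le : P.real A - Q.real A ≤ P.real (↑S)ᶜ + (P.real T - Q.real T) := by
    have hdiff : P.real (A \ S) ≤ P.real (↑S)ᶜ := measureReal_mono fun x hx => hx.2
    rw [hTA, measureReal_inter_conull hQS]
    linarith [measureReal_inter_add_sdiff (μ := P) (s := A) S.finite_toSet.measurableSet]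
  have hcover : P.real (↑S)ᶜ ≤ ∑ i, P.real (f i ⁻¹' (f i '' S)ᶜ) := by
    refine (measureReal_mono fun w hw => ?_).trans (measureReal_iUnion_fintype_le _)
    refine Set.mem_iUnion.2 ⟨j w, fun ⟨y, hyS, hyw⟩ => hj w y hyS ?_ hyw⟩
    rintro rfl
    exact hw hyS
  have hsplit : P.real T - Q.real T =
      ∑ i, (P.real ↑{x ∈ T | j x = i} - Q.real ↑{x ∈ T | j x = i}) := by
    simp only [← sum_measureReal_singleton, ← sum_sub_distrib]
    exact (sum_fiberwise T j _).symm
  calc P.real A - Q.real A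
      ≤ ∑ i, (P.real (f i ⁻¹' (f i '' S)ᶜ) +
          (P.real ↑{x ∈ T | j x = i} - Q.real ↑{x ∈ T | j x = i})) := by
        rw [sum_add_distrib, ← hsplit]
        linarith
    _ ≤ ∑ i, dTV (P.map (f i)) (Q.map (f i)) := by
        refine sum_le_sum fun i _ => measureReal_sub_le_dTV_map (hf i) hQS
          ((filter_subset _ _).trans (filter_subset _ _)) fun x hx => ?_
        obtain rfl := (mem_filter.1 hx).2
        exact hj x

end Separating

/-- Quantitative Heppes theorem. -/
theorem stmt2 {d k : ℕ} (P Q : Measure (EuclideanSpace ℝ (Fin d)))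
    [IsProbabilityMeasure P] [IsProbabilityMeasure Q]
    (S : Finset (EuclideanSpace ℝ (Fin d))) (hScard : S.card ≤ k)
    (hQS : Q (↑S : Set (EuclideanSpace ℝ (Fin d)))ᶜ = 0)
    (H : Fin (k + 1) → Submodule ℝ (EuclideanSpace ℝ (Fin d)))
    (hH : ∀ i j, i ≠ j → (H i)ᗮ ⊓ (H j)ᗮ = ⊥) :
    dTV P Q ≤ ∑ j : Fin (k + 1), dTV (projMeasure (H j) P) (projMeasure (H j) Q) := by
  have hsep := exists_separating_index_of_card_lt
    (f := fun j => (H j).orthogonalProjectionOnto)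
    (fun i j hij => injective_orthogonalProjectionOnto_prod (hH i j hij))
    (by simpa using Nat.lt_succ_of_le hScard)
  exact dTV_le_sum_dTV_map (fun j => (H j).orthogonalProjectionOnto.continuous.measurable)
    hQS hsep
end

section
/- Let P be a probability measure on ℝ^d, Q a discrete probability measure on ℝ^d with support of at most k points, and H_1, …, H_{k+1} subspaces with H_i^⊥ ∩ H_j^⊥ = {0} for i ≠ j. Define A_j to be the set of x ∈ ℝ^d such that (x + H_j^⊥) \ {x} is disjoint from the support of Q. Then the A_j cover ℝ^d, and for any Borel set B_j ⊆ A_j one has Q(B_j + H_j^⊥) = Q(B_j), where B_j + H_j^⊥ = ∪_{x∈B_j}(x + H_j^⊥). -/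
/-!
Write `D_V(x) = (x + V) \ {x}`. If `x` lay in no `A_j`, each `D_{H_jᗮ}(x)` would contain an atom
`s_j` of `Q`; as `s_j - x` is a nonzero vector of `H_jᗮ` and these complements meet only in `0`,
the `k + 1` atoms `s_j` are distinct, although `Q` has at most `k`. For `B ⊆ A_j`, every atom in
`B + H_jᗮ` is of the form `b + v` with `b ∈ B`, and `b + v ∉ D(b)` forces `b + v = b ∈ B`;
so `B + H_jᗮ` and `B` differ by a `Q`-null set.
-/

open MeasureTheory Pointwise

section Translate

variable {M : Type*}

lemma mem_image_add_diff_singleton_iff [AddCommGroup M] {V : Set M} {x y : M} :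
    y ∈ ((x + ·) '' V) \ {x} ↔ y - x ∈ V ∧ y ≠ x := by
  simp only [Set.mem_sdiff, Set.mem_image, Set.mem_singleton_iff]
  constructor
  · rintro ⟨⟨v, hv, rfl⟩, hne⟩
    exact ⟨by simpa using hv, hne⟩
  · rintro ⟨hy, hne⟩
    exact ⟨⟨y - x, hy, add_sub_cancel x y⟩, hne⟩

lemma exists_disjoint_image_add_diff_singleton {R ι : Type*} [Ring R] [AddCommGroup M]
    [Module R M] [Fintype ι] (V : ι → Submodule R M) (hV : Pairwise fun i j => V i ⊓ V j = ⊥)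
    (S : Finset M) (hS : S.card < Fintype.card ι) (x : M) :
    ∃ j, Disjoint (((x + ·) '' (V j : Set M)) \ {x}) (S : Set M) := by
  by_contra! hx
  have hatom : ∀ j, ∃ s ∈ S, s - x ∈ V j ∧ s ≠ x := fun j => by
    obtain ⟨s, hs, hsS⟩ := Set.not_disjoint_iff.mp (hx j)
    exact ⟨s, hsS, mem_image_add_diff_singleton_iff.mp hs⟩
  choose f hfS hfV hfne using hatom
  have hinj : Function.Injective f := fun i j hij => by
    by_contra hne
    have hmem : f i - x ∈ V i ⊓ V j := ⟨hfV i, hij ▸ hfV j⟩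
    rw [hV hne, Submodule.mem_bot, sub_eq_zero] at hmem
    exact hfne i hmem
  have hcard := Finset.card_le_card_of_injOn (s := Finset.univ) f
    (fun j _ => Finset.mem_coe.mpr (hfS j)) hinj.injOn
  rw [Finset.card_univ] at hcard
  exact hS.not_ge hcard

lemma add_inter_subset_of_forall_disjoint [Add M] {B V S : Set M}
    (h : ∀ x ∈ B, Disjoint (((x + ·) '' V) \ {x}) S) : (B + V) ∩ S ⊆ B := by
  rintro _ ⟨⟨b, hb, v, hv, rfl⟩, hS⟩
  change b + v ∈ S at hS
  change b + v ∈ B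
  by_cases heq : b + v = b
  · rwa [heq]
  · exact absurd hS (Set.disjoint_left.mp (h b hb) ⟨⟨v, hv, rfl⟩, heq⟩)

lemma measure_add_eq_of_forall_disjoint [AddZeroClass M] [MeasurableSpace M] (μ : Measure M)
    {B V S : Set M} (hV : 0 ∈ V) (hS : μ Sᶜ = 0)
    (h : ∀ x ∈ B, Disjoint (((x + ·) '' V) \ {x}) S) : μ (B + V) = μ B := by
  refine le_antisymm ?_ (measure_mono (Set.subset_add_left B hV))
  calc μ (B + V) = μ ((B + V) ∩ S) := (measure_inter_conull hS).symm
    _ ≤ μ B := measure_mono (add_inter_subset_of_forall_disjoint h)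

end Translate

theorem stmt13_general {d k : ℕ} (Q : Measure (EuclideanSpace ℝ (Fin d)))
    (S : Finset (EuclideanSpace ℝ (Fin d))) (hScard : S.card ≤ k)
    (hQS : Q (↑S : Set (EuclideanSpace ℝ (Fin d)))ᶜ = 0)
    (H : Fin (k + 1) → Submodule ℝ (EuclideanSpace ℝ (Fin d)))
    (hH : ∀ i j, i ≠ j → (H i)ᗮ ⊓ (H j)ᗮ = ⊥)
    (A : Fin (k + 1) → Set (EuclideanSpace ℝ (Fin d)))
    (hA : ∀ j, A j = {x | Disjoint
      (((x + ·) '' ((H j)ᗮ : Set (EuclideanSpace ℝ (Fin d)))) \ {x})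
      (↑S : Set (EuclideanSpace ℝ (Fin d)))}) :
    (⋃ j, A j) = Set.univ ∧
      ∀ j, ∀ B : Set (EuclideanSpace ℝ (Fin d)), MeasurableSet B → B ⊆ A j →
        Q (B + ((H j)ᗮ : Set (EuclideanSpace ℝ (Fin d)))) = Q B := by
  refine ⟨Set.eq_univ_of_forall fun x => Set.mem_iUnion.mpr ?_, fun j B _ hBA => ?_⟩
  · obtain ⟨j, hj⟩ := exists_disjoint_image_add_diff_singleton (fun j => (H j)ᗮ)
      (fun i j hij => hH i j hij) S (by simpa using Nat.lt_succ_of_le hScard) x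
    exact ⟨j, by rw [hA j]; exact hj⟩
  · refine measure_add_eq_of_forall_disjoint Q (H j)ᗮ.zero_mem hQS fun x hx => ?_
    have hxA := hBA hx
    rw [hA j] at hxA
    exact hxA

theorem stmt13 {d k : ℕ} (P Q : Measure (EuclideanSpace ℝ (Fin d)))
    [IsProbabilityMeasure P] [IsProbabilityMeasure Q]
    (S : Finset (EuclideanSpace ℝ (Fin d))) (hScard : S.card ≤ k)
    (hQS : Q (↑S : Set (EuclideanSpace ℝ (Fin d)))ᶜ = 0)
    (H : Fin (k + 1) → Submodule ℝ (EuclideanSpace ℝ (Fin d)))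
    (hH : ∀ i j, i ≠ j → (H i)ᗮ ⊓ (H j)ᗮ = ⊥)
    (A : Fin (k + 1) → Set (EuclideanSpace ℝ (Fin d)))
    (hA : ∀ j, A j = {x | Disjoint
      (((x + ·) '' ((H j)ᗮ : Set (EuclideanSpace ℝ (Fin d)))) \ {x})
      (↑S : Set (EuclideanSpace ℝ (Fin d)))}) :
    (⋃ j, A j) = Set.univ ∧
      ∀ j, ∀ B : Set (EuclideanSpace ℝ (Fin d)), MeasurableSet B → B ⊆ A j →
        Q (B + ((H j)ᗮ : Set (EuclideanSpace ℝ (Fin d)))) = Q B :=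
  stmt13_general Q S hScard hQS H hH A hA
end
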